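/- arXiv:0907.1108 — 2 statements merged into one kernel-verified Lean document; each statement's English description precedes it below -/
import Mathlib

section
/- Let k be a field of characteristic 0, n ≥ 2, and α_2, ..., α_{n-1} ∈ k. In k[[x,y]], the quotient by the ideal J = (x^n, y^2 + α_2 x^2 + ... + α_{n-1} x^{n-1}) has k-vector space dimension 2n; moreover J is generated by a regular sequence in k[[x,y]] (i.e. the quotient is a complete intersection). -/
/-! Modulo `xⁿ` the series `y² + q` with `x ∣ q` behaves like a monic polynomial in `y`:
comparing the coefficients of `xⁱ yʲ⁺²` shows, by induction on `i`, that `xⁿ ∣ (y² + q) v`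
forces `xⁿ ∣ v`. This is the regularity of `y² + q` on `k⟦x,y⟧/(xⁿ)`, and it also gives the
linear independence of the classes of `xⁱ yʲ` (`i < n`, `j < 2`) modulo `J = (xⁿ, y² + q)`.
These classes span: `y²ⁿ ≡ (-q)ⁿ ≡ 0`, so `J` contains every series supported outside a finite
box, and on polynomials the relation `y² ≡ -q` lowers the degree in `y`. -/

open MvPowerSeries

theorem Ideal.pow_mul_mem_span_pair_of_dvd {A : Type*} [CommRing A] {x y q : A} (hq : x ∣ q)
    (m n : ℕ) : y ^ (m * n) ∈ Ideal.span {x ^ n, y ^ m + q} := by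
  rw [show y ^ (m * n) = ((y ^ m) ^ n - (-q) ^ n) + (-q) ^ n by ring]
  refine add_mem (Ideal.mem_of_dvd _ ?_ (subset_span (Set.mem_insert_of_mem _ rfl)))
    (Ideal.mem_of_dvd _ (pow_dvd_pow_of_dvd (dvd_neg.mpr hq) n) (subset_span (Set.mem_insert _ _)))
  simpa using sub_dvd_pow_sub_pow (y ^ m) (-q) n

namespace MvPowerSeries

variable {σ R : Type*}

section CommSemiring

variable [CommSemiring R]

theorem coeff_add_single_X_pow_mul (s : σ) (n : ℕ) (d : σ →₀ ℕ) (φ : MvPowerSeries σ R) :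
    coeff (d + Finsupp.single s n) (X s ^ n * φ) = coeff d φ := by
  rw [X_pow_eq, coeff_monomial_mul, if_pos le_add_self, one_mul, add_tsub_cancel_right]

theorem isSMulRegular_X_pow (s : σ) (n : ℕ) :
    IsSMulRegular (MvPowerSeries σ R) (X s ^ n : MvPowerSeries σ R) := fun φ ψ h => by
  ext d
  rw [← coeff_add_single_X_pow_mul s n, ← coeff_add_single_X_pow_mul s n d ψ]
  exact congrArg _ h

theorem X_pow_mul_X_pow_eq_monomial (s t : σ) (i j : ℕ) :
    (X s ^ i * X t ^ j : MvPowerSeries σ R) =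
      monomial (Finsupp.single s i + Finsupp.single t j) 1 := by
  rw [X_pow_eq, X_pow_eq, monomial_mul_monomial, one_mul]

theorem monomial_eq_smul_X_pow_mul_X_pow (u : Fin 2 →₀ ℕ) (a : R) :
    monomial u a = a • (X 0 ^ u 0 * X 1 ^ u 1 : MvPowerSeries (Fin 2) R) := by
  rw [X_pow_mul_X_pow_eq_monomial, ← map_smul, smul_eq_mul, mul_one]
  congr
  ext i
  fin_cases i <;> simp

theorem mem_span_X_pow_pair_of_coeff_eq_zero (s t : σ) (a b : ℕ) {φ : MvPowerSeries σ R}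
    (hφ : ∀ d : σ →₀ ℕ, d s < a → d t < b → coeff d φ = 0) :
    φ ∈ Ideal.span {X s ^ a, X t ^ b} := by
  classical
  let φs : MvPowerSeries σ R := fun d => if d s < a then 0 else coeff d φ
  let φt : MvPowerSeries σ R := fun d => if d s < a then coeff d φ else 0
  obtain ⟨u, hu⟩ : X s ^ a ∣ φs := X_pow_dvd_iff.mpr fun d hd => if_pos hd
  obtain ⟨w, hw⟩ : X t ^ b ∣ φt := X_pow_dvd_iff.mpr fun d hd => by
    change ite _ _ _ = _
    split_ifs with hds
    exacts [hφ d hds hd, rfl]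
  refine Ideal.mem_span_pair.mpr ⟨u, w, ?_⟩
  ext d
  rw [mul_comm u, mul_comm w, ← hu, ← hw, map_add]
  change ite (d s < a) 0 (coeff d φ) + ite (d s < a) (coeff d φ) 0 = _
  split_ifs <;> simp

theorem X_pow_dvd_of_coeff_X_pow_add_mul_eq_zero {s t : σ} (hst : s ≠ t) {m : ℕ}
    {q v : MvPowerSeries σ R} (hq : X s ∣ q) (n : ℕ)
    (hv : ∀ d : σ →₀ ℕ, m ≤ d t → d s < n → coeff d ((X t ^ m + q) * v) = 0) :
    X s ^ n ∣ v := by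
  induction n with
  | zero => simp
  | succ n ih =>
    obtain ⟨w, rfl⟩ := ih fun d hdt hds => hv d hdt (by omega)
    rw [pow_succ]
    refine mul_dvd_mul_left _ (X_dvd_iff.mpr fun e he => ?_)
    have hqw : coeff (e + Finsupp.single t m) (q * w) = 0 :=
      X_dvd_iff.mp (dvd_mul_of_dvd_left hq w) _ (by simp [he, hst])
    have := hv (e + Finsupp.single t m + Finsupp.single s n) (by simp [hst.symm])
      (by simp [he, hst])
    rwa [show (X t ^ m + q) * (X s ^ n * w) = X s ^ n * (X t ^ m * w + q * w) by ring,
      coeff_add_single_X_pow_mul, map_add, hqw, add_zero, coeff_add_single_X_pow_mul] at this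

theorem X_dvd_sum_C_mul_X_pow (s : σ) {A : Finset ℕ} (hA : ∀ a ∈ A, a ≠ 0) (c : ℕ → R) :
    X s ∣ ∑ a ∈ A, C (c a) * X s ^ a :=
  Finset.dvd_sum fun a ha => dvd_mul_of_dvd_right (dvd_pow_self _ (hA a ha)) _

end CommSemiring

theorem isRegular_X_pow_X_pow_add [CommRing R] [Nontrivial R] {s t : σ} (hst : s ≠ t)
    {m n : ℕ} (hm : m ≠ 0) (hn : n ≠ 0) {q : MvPowerSeries σ R} (hq : X s ∣ q) :
    RingTheory.Sequence.IsRegular (MvPowerSeries σ R) [X s ^ n, X t ^ m + q] := by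
  refine ⟨?_, ?_⟩
  · refine RingTheory.Sequence.IsWeaklyRegular.cons (isSMulRegular_X_pow s n)
      ((RingTheory.Sequence.isWeaklyRegular_singleton_iff _ _).mpr ?_)
    refine (isSMulRegular_quotient_iff_mem_of_smul_mem _ _).mpr fun v hv => ?_
    obtain ⟨u, -, hu⟩ := (Submodule.mem_smul_pointwise_iff_exists _ _ _).mp hv
    obtain ⟨w, rfl⟩ := X_pow_dvd_of_coeff_X_pow_add_mul_eq_zero hst hq n fun d _ hd =>
      X_pow_dvd_iff.mp ⟨u, hu.symm⟩ d hd
    exact (Submodule.mem_smul_pointwise_iff_exists _ _ _).mpr ⟨w, trivial, rfl⟩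
  · have hle : Ideal.ofList [X s ^ n, X t ^ m + q] ≤ RingHom.ker (constantCoeff (R := R)) := by
      refine Ideal.span_le.mpr fun r hr => ?_
      obtain ⟨r', hr'⟩ := hq
      simp only [Set.mem_ofPred_eq, List.mem_cons, List.not_mem_nil, or_false] at hr
      rcases hr with rfl | rfl <;> simp [hr', hm, hn]
    rw [Ideal.smul_eq_mul, Ideal.mul_top]
    exact fun h => one_ne_zero (hle (h ▸ Submodule.mem_top : (1 : MvPowerSeries σ R) ∈ _))

end MvPowerSeries

section TwoVariables

variable {k : Type*} [CommRing k]

noncomputable def monomialClass (J : Ideal (MvPowerSeries (Fin 2) k)) (n : ℕ)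
    (p : Fin n × Fin 2) : MvPowerSeries (Fin 2) k ⧸ J :=
  Ideal.Quotient.mkₐ k J (X 0 ^ (p.1 : ℕ) * X 1 ^ (p.2 : ℕ))

variable {J : Ideal (MvPowerSeries (Fin 2) k)} {n : ℕ}

theorem mkₐ_X_pow_mul_X_pow_mem_span_monomialClass {s : Finset ℕ} {c : ℕ → k}
    (hx : X 0 ^ n ∈ J) (hy : X 1 ^ 2 + ∑ a ∈ s, C (c a) * X 0 ^ a ∈ J) (j i : ℕ) :
    Ideal.Quotient.mkₐ k J (X 0 ^ i * X 1 ^ j) ∈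
      Submodule.span k (Set.range (monomialClass J n)) := by
  induction j using Nat.strong_induction_on generalizing i with
  | _ j ih =>
  by_cases hj : 2 ≤ j
  · obtain ⟨j, rfl⟩ : ∃ j', j = j' + 2 := ⟨j - 2, by omega⟩
    have hzero : Ideal.Quotient.mkₐ k J
        (X 0 ^ i * X 1 ^ j * (X 1 ^ 2 + ∑ a ∈ s, C (c a) * X 0 ^ a)) = 0 :=
      Ideal.Quotient.eq_zero_iff_mem.mpr (J.mul_mem_left _ hy)
    have hterm : ∀ a ∈ s, (X 0 ^ i * X 1 ^ j * (C (c a) * X 0 ^ a) : MvPowerSeries (Fin 2) k)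
        = c a • (X 0 ^ (i + a) * X 1 ^ j) := fun a _ => by
      rw [smul_eq_C_mul]; ring
    rw [mul_add, Finset.mul_sum, Finset.sum_congr rfl hterm, map_add, map_sum,
      mul_assoc, ← pow_add] at hzero
    rw [eq_neg_of_add_eq_zero_left hzero]
    refine Submodule.neg_mem _ (Submodule.sum_mem _ fun a _ => ?_)
    rw [map_smul]
    exact Submodule.smul_mem _ _ (ih j (by omega) (i + a))
  by_cases hi : n ≤ i
  · rw [Ideal.Quotient.mkₐ_eq_mk, Ideal.Quotient.eq_zero_iff_mem.mpr
      (J.mem_of_dvd (dvd_mul_of_dvd_left (pow_dvd_pow _ hi) _) hx)]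
    exact zero_mem _
  · exact Submodule.subset_span ⟨(⟨i, by omega⟩, ⟨j, by omega⟩), rfl⟩

theorem span_monomialClass_eq_top {s : Finset ℕ} {c : ℕ → k} (hs : ∀ a ∈ s, a ≠ 0)
    (hx : X 0 ^ n ∈ J) (hy : X 1 ^ 2 + ∑ a ∈ s, C (c a) * X 0 ^ a ∈ J) :
    Submodule.span k (Set.range (monomialClass J n)) = ⊤ := by
  refine eq_top_iff.mpr fun x _ => ?_
  obtain ⟨φ, rfl⟩ := Ideal.Quotient.mkₐ_surjective k J x
  have hspan : Ideal.span {X 0 ^ n, X 1 ^ 2 + ∑ a ∈ s, C (c a) * X 0 ^ a} ≤ J :=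
    Ideal.span_le.mpr <| Set.insert_subset hx (Set.singleton_subset_iff.mpr hy)
  have hy2n : X 1 ^ (2 * n) ∈ J :=
    hspan (Ideal.pow_mul_mem_span_pair_of_dvd (X_dvd_sum_C_mul_X_pow 0 hs c) 2 n)
  set e : Fin 2 →₀ ℕ := Finsupp.single 0 n + Finsupp.single 1 (2 * n)
  have htail : φ - trunc' k e φ ∈ J := by
    refine Ideal.span_le.mpr (Set.insert_subset ?_ (Set.singleton_subset_iff.mpr ?_))
      (mem_span_X_pow_pair_of_coeff_eq_zero 0 1 (n + 1) (2 * n + 1) fun d h0 h1 => ?_)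
    · exact J.mem_of_dvd (pow_dvd_pow _ n.le_succ) hx
    · exact J.mem_of_dvd (pow_dvd_pow _ (2 * n).le_succ) hy2n
    · have hde : d ≤ e := Finsupp.le_def.mpr fun i => by fin_cases i <;> simp [e] <;> omega
      rw [map_sub, MvPolynomial.coeff_coe, coeff_trunc', if_pos hde, sub_self]
  rw [Ideal.Quotient.mkₐ_eq_mk, Ideal.Quotient.eq.mpr htail, ← Ideal.Quotient.mkₐ_eq_mk k]
  induction trunc' k e φ using MvPolynomial.induction_on' with
  | monomial u a =>
    rw [MvPolynomial.coe_monomial, monomial_eq_smul_X_pow_mul_X_pow, map_smul]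
    exact Submodule.smul_mem _ _ (mkₐ_X_pow_mul_X_pow_mem_span_monomialClass hx hy _ _)
  | add p p' hp hp' =>
    rw [MvPolynomial.coe_add, map_add]
    exact add_mem hp hp'

theorem linearIndependent_monomialClass {q : MvPowerSeries (Fin 2) k} (hq : X 0 ∣ q) :
    LinearIndependent k (monomialClass (Ideal.span {X 0 ^ n, X 1 ^ 2 + q}) n) := by
  rw [Fintype.linearIndependent_iff]
  intro c hc
  let e : Fin n × Fin 2 → Fin 2 →₀ ℕ := fun p =>
    Finsupp.single 0 (p.1 : ℕ) + Finsupp.single 1 (p.2 : ℕ)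
  have he : ∀ p, e p 0 = p.1 ∧ e p 1 = p.2 := by simp [e]
  have he_inj : e.Injective := fun p p' h => Prod.ext
    (Fin.ext <| (he p).1.symm.trans <| (congrArg (· 0) h).trans (he p').1)
    (Fin.ext <| (he p).2.symm.trans <| (congrArg (· 1) h).trans (he p').2)
  set P : MvPowerSeries (Fin 2) k := ∑ p, monomial (e p) (c p)
  have hcoeff : ∀ d, coeff d P = ∑ p, if d = e p then c p else 0 := by
    simp [P, coeff_monomial]
  have hP : P ∈ Ideal.span {X 0 ^ n, X 1 ^ 2 + q} := by
    rw [← Ideal.Quotient.eq_zero_iff_mem, ← Ideal.Quotient.mkₐ_eq_mk k, ← hc, map_sum]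
    refine Finset.sum_congr rfl fun p _ => ?_
    rw [monomial_eq_smul_X_pow_mul_X_pow, map_smul, (he p).1, (he p).2]
    rfl
  obtain ⟨u, w, huw⟩ := Ideal.mem_span_pair.mp hP
  have hw : X 0 ^ n ∣ w :=
    X_pow_dvd_of_coeff_X_pow_add_mul_eq_zero zero_ne_one hq n fun d h2 h0 => by
      rw [mul_comm, eq_sub_of_add_eq' huw, map_sub, X_pow_dvd_iff.mp (dvd_mul_left _ u) d h0,
        sub_zero, hcoeff]
      refine Finset.sum_eq_zero fun p _ => if_neg ?_
      rintro rfl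
      have := (he p).2
      omega
  have hPdvd : X 0 ^ n ∣ P := huw ▸ dvd_add (dvd_mul_left _ _) (dvd_mul_of_dvd_left hw _)
  intro p
  have := X_pow_dvd_iff.mp hPdvd (e p) (by rw [(he p).1]; exact p.1.isLt)
  rwa [hcoeff, Finset.sum_eq_single p (fun p' _ hp' => if_neg (he_inj.ne hp'.symm))
    (by simp), if_pos rfl] at this

theorem finrank_quotient_span_X_pow_X_sq_add [Nontrivial k] {s : Finset ℕ} (hs : ∀ a ∈ s, a ≠ 0)
    (c : ℕ → k) :
    Module.finrank k (MvPowerSeries (Fin 2) k ⧸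
      Ideal.span {X 0 ^ n, X 1 ^ 2 + ∑ a ∈ s, C (c a) * X 0 ^ a}) = 2 * n := by
  have hspan := span_monomialClass_eq_top
    (J := Ideal.span {X 0 ^ n, X 1 ^ 2 + ∑ a ∈ s, C (c a) * X 0 ^ a}) hs
    (Ideal.subset_span (Set.mem_insert _ _)) (Ideal.subset_span (Set.mem_insert_of_mem _ rfl))
  rw [Module.finrank_eq_card_basis
      (.mk (linearIndependent_monomialClass (X_dvd_sum_C_mul_X_pow 0 hs c)) hspan.ge),
    Fintype.card_prod, Fintype.card_fin, Fintype.card_fin, mul_comm]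

end TwoVariables

theorem stmt4_general (k : Type*) [Field k] (n : ℕ) (hn : 2 ≤ n) (α : ℕ → k)
    (f g : MvPowerSeries (Fin 2) k)
    (hf : f = (X 0 : MvPowerSeries (Fin 2) k) ^ n)
    (hg : g = (X 1 : MvPowerSeries (Fin 2) k) ^ 2 +
      ∑ i ∈ Finset.Icc 2 (n - 1), C (α i) * X 0 ^ i) :
    Module.finrank k (MvPowerSeries (Fin 2) k ⧸ Ideal.span {f, g}) = 2 * n ∧
    RingTheory.Sequence.IsRegular (MvPowerSeries (Fin 2) k) [f, g] := by
  subst hf hg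
  have hs : ∀ a ∈ Finset.Icc 2 (n - 1), a ≠ 0 := fun a ha => by
    rw [Finset.mem_Icc] at ha
    omega
  exact ⟨finrank_quotient_span_X_pow_X_sq_add hs α, isRegular_X_pow_X_pow_add zero_ne_one
    two_ne_zero (by omega) (X_dvd_sum_C_mul_X_pow 0 hs α)⟩

/-- In `k[[x,y]]` (char 0), the quotient by `J = (xⁿ, y² + α₂x² + ⋯ + α_{n-1}x^{n-1})`
has `k`-dimension `2n`, and the two generators form a regular sequence
(the quotient is a complete intersection). -/
theorem stmt4 (k : Type*) [Field k] [CharZero k] (n : ℕ) (hn : 2 ≤ n) (α : ℕ → k)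
    (f g : MvPowerSeries (Fin 2) k)
    (hf : f = (X 0 : MvPowerSeries (Fin 2) k) ^ n)
    (hg : g = (X 1 : MvPowerSeries (Fin 2) k) ^ 2 +
      ∑ i ∈ Finset.Icc 2 (n - 1), C (α i) * X 0 ^ i) :
    Module.finrank k (MvPowerSeries (Fin 2) k ⧸ Ideal.span {f, g}) = 2 * n ∧
    RingTheory.Sequence.IsRegular (MvPowerSeries (Fin 2) k) [f, g] :=
  stmt4_general k n hn α f g hf hg
end

section
/- Let k be an algebraically closed field of characteristic 0 and let I_3 = (c_1x^2 + c_2xy + c_3y^2, x^3, x^2y, xy^2, y^3) ⊂ k[x,y] with (c_1,c_2,c_3) ≠ (0,0,0). Then after a linear change of coordinates in x,y, the ideal I_3 equals either (x^2, xy^2, y^3) (when the binary quadratic form c_1x^2+c_2xy+c_3y^2 has a double root, i.e. c_2^2 - 4c_1c_3 = 0) or (x^3, xy, y^3) (when c_2^2 - 4c_1c_3 ≠ 0). -/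
/-!
A linear change of coordinates preserves the ideal `𝔪³` spanned by the cubic monomials, so it
carries `I₃ = (q) + 𝔪³` to `(q') + 𝔪³`, where `q'` is the transformed quadratic form. A nonzero
binary quadratic form of discriminant zero is a multiple of the square of a linear form, and one of
nonzero discriminant is, once the discriminant has a square root, a product of two independent
linear forms. Taking these linear forms as coordinates makes `q'` a unit multiple of `x²`,
resp. `xy`, and `(x²) + 𝔪³ = (x², xy², y³)`, `(xy) + 𝔪³ = (x³, xy, y³)`.
-/

open MvPolynomial

noncomputable section

namespace BinaryForm

variable {R : Type*} [CommRing R]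

def linForm (a b : R) : MvPolynomial (Fin 2) R := C a * X 0 + C b * X 1

def quadForm (a b c : R) : MvPolynomial (Fin 2) R :=
  C a * X 0 ^ 2 + C b * X 0 * X 1 + C c * X 1 ^ 2

def linSubst (M : Matrix (Fin 2) (Fin 2) R) :
    MvPolynomial (Fin 2) R →ₐ[R] MvPolynomial (Fin 2) R :=
  aeval fun i => linForm (M i 0) (M i 1)

def cubes : Set (MvPolynomial (Fin 2) R) := {X 0 ^ 3, X 0 ^ 2 * X 1, X 0 * X 1 ^ 2, X 1 ^ 3}

@[simp]
lemma linSubst_X (M : Matrix (Fin 2) (Fin 2) R) (i : Fin 2) :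
    linSubst M (X i) = linForm (M i 0) (M i 1) :=
  aeval_X _ _

lemma linSubst_linForm (M : Matrix (Fin 2) (Fin 2) R) (a b : R) :
    linSubst M (linForm a b) = linForm (a * M 0 0 + b * M 1 0) (a * M 0 1 + b * M 1 1) := by
  simp only [linForm, map_add, map_mul, linSubst_X, algHom_C, algebraMap_eq]
  ring

lemma linSubst_quadForm (p q r t a b c : R) :
    linSubst !![p, q; r, t] (quadForm a b c) =
      quadForm (a * p ^ 2 + b * p * r + c * r ^ 2)
        (2 * a * p * q + b * (p * t + q * r) + 2 * c * r * t)
        (a * q ^ 2 + b * q * t + c * t ^ 2) := by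
  simp only [quadForm, linForm, map_add, map_mul, map_pow, linSubst_X, algHom_C, algebraMap_eq,
    map_ofNat, Matrix.of_apply, Matrix.cons_val', Matrix.cons_val_zero, Matrix.cons_val_one,
    Matrix.empty_val', Matrix.cons_val_fin_one]
  ring

lemma linSubst_comp (M N : Matrix (Fin 2) (Fin 2) R) :
    (linSubst M).comp (linSubst N) = linSubst (N * M) :=
  algHom_ext fun i => by simp [linSubst_linForm, Matrix.mul_apply, Fin.sum_univ_two]

lemma linSubst_one : linSubst (1 : Matrix (Fin 2) (Fin 2) R) = AlgHom.id R _ :=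
  algHom_ext fun i => by fin_cases i <;> simp [linForm]

lemma map_linSubst_eq_self {I : Ideal (MvPolynomial (Fin 2) R)}
    (hI : ∀ N, I.map (linSubst N) ≤ I) {M : Matrix (Fin 2) (Fin 2) R} (hM : IsUnit M.det) :
    I.map (linSubst M) = I := by
  refine (hI M).antisymm fun p hp => ?_
  have hp' : p = linSubst M (linSubst M⁻¹ p) := by
    rw [← AlgHom.comp_apply, linSubst_comp, Matrix.nonsing_inv_mul _ hM, linSubst_one,
      AlgHom.id_apply]
  exact hp' ▸ Ideal.mem_map_of_mem _ (hI M⁻¹ (Ideal.mem_map_of_mem _ hp))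

lemma linForm_mul_mem_span_cubes (a₁ b₁ a₂ b₂ a₃ b₃ : R) :
    linForm a₁ b₁ * linForm a₂ b₂ * linForm a₃ b₃ ∈
      Ideal.span (cubes : Set (MvPolynomial (Fin 2) R)) := by
  have h : linForm a₁ b₁ * linForm a₂ b₂ * linForm a₃ b₃ =
      (C (a₁ * a₂ * a₃) * X 0 ^ 3
        + C (a₁ * a₂ * b₃ + a₁ * b₂ * a₃ + b₁ * a₂ * a₃) * (X 0 ^ 2 * X 1)
        + C (a₁ * b₂ * b₃ + b₁ * a₂ * b₃ + b₁ * b₂ * a₃) * (X 0 * X 1 ^ 2)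
        + C (b₁ * b₂ * b₃) * X 1 ^ 3 : MvPolynomial (Fin 2) R) := by
    simp only [linForm, C_add, C_mul]
    ring
  rw [h]
  refine add_mem (add_mem (add_mem ?_ ?_) ?_) ?_ <;>
    exact Ideal.mul_mem_left _ _ (Ideal.subset_span (by simp [cubes]))

lemma map_linSubst_span_cubes_le (M : Matrix (Fin 2) (Fin 2) R) :
    (Ideal.span cubes).map (linSubst M) ≤ Ideal.span cubes := by
  rw [Ideal.map_span, Ideal.span_le]
  rintro _ ⟨p, hp, rfl⟩
  simp only [cubes, Set.mem_insert_iff, Set.mem_singleton_iff] at hp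
  rcases hp with rfl | rfl | rfl | rfl <;>
  · simp only [SetLike.mem_coe, map_mul, linSubst_X, pow_succ, pow_zero, one_mul, ← mul_assoc]
    exact linForm_mul_mem_span_cubes _ _ _ _ _ _

lemma map_linSubst_span_insert_cubes {M : Matrix (Fin 2) (Fin 2) R} (hM : IsUnit M.det)
    (q : MvPolynomial (Fin 2) R) :
    (Ideal.span (insert q cubes)).map (linSubst M) =
      Ideal.span {linSubst M q} ⊔ Ideal.span cubes := by
  rw [Ideal.span_insert, Ideal.map_sup, Ideal.map_span, Set.image_singleton,
    map_linSubst_eq_self map_linSubst_span_cubes_le hM]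

lemma span_quadForm_sq_sup_span_cubes {e : R} (he : IsUnit e) :
    Ideal.span {quadForm e 0 0} ⊔ Ideal.span cubes =
      Ideal.span {X 0 ^ 2, X 0 * X 1 ^ 2, X 1 ^ 3} := by
  simp only [quadForm, map_zero, zero_mul, add_zero]
  rw [Ideal.span_singleton_mul_left_unit (he.map C), ← Ideal.span_insert]
  refine le_antisymm (Ideal.span_le.2 ?_) (Ideal.span_mono ?_)
  · have hx :
        X 0 ^ 2 ∈ Ideal.span {X 0 ^ 2, X 0 * X 1 ^ 2, (X 1 : MvPolynomial (Fin 2) R) ^ 3} :=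
      Ideal.subset_span (by simp)
    simp only [cubes, Set.insert_subset_iff, Set.singleton_subset_iff, SetLike.mem_coe]
    exact ⟨hx, Ideal.mem_of_dvd _ (pow_dvd_pow _ (by norm_num)) hx,
      Ideal.mem_of_dvd _ (dvd_mul_right _ _) hx, Ideal.subset_span (by simp),
      Ideal.subset_span (by simp)⟩
  · simp [cubes, Set.insert_subset_iff]

lemma span_quadForm_mul_sup_span_cubes {e : R} (he : IsUnit e) :
    Ideal.span {quadForm 0 e 0} ⊔ Ideal.span cubes =
      Ideal.span {X 0 ^ 3, X 0 * X 1, X 1 ^ 3} := by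
  simp only [quadForm, map_zero, zero_mul, zero_add, add_zero, mul_assoc]
  rw [Ideal.span_singleton_mul_left_unit (he.map C), ← Ideal.span_insert]
  refine le_antisymm (Ideal.span_le.2 ?_) (Ideal.span_mono ?_)
  · have hxy :
        X 0 * X 1 ∈ Ideal.span {X 0 ^ 3, X 0 * X 1, (X 1 : MvPolynomial (Fin 2) R) ^ 3} :=
      Ideal.subset_span (by simp)
    simp only [cubes, Set.insert_subset_iff, Set.singleton_subset_iff, SetLike.mem_coe]
    exact ⟨hxy, Ideal.subset_span (by simp), Ideal.mem_of_dvd _ ⟨X 0, by ring⟩ hxy,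
      Ideal.mem_of_dvd _ ⟨X 1, by ring⟩ hxy, Ideal.subset_span (by simp)⟩
  · simp [cubes, Set.insert_subset_iff]

section Field

variable {k : Type*} [Field k]

lemma exists_linSubst_quadForm_eq_sq (h2 : (2 : k) ≠ 0) {a b c : k}
    (hq : ¬(a = 0 ∧ b = 0 ∧ c = 0)) (hd : b ^ 2 - 4 * a * c = 0) :
    ∃ M : Matrix (Fin 2) (Fin 2) k, IsUnit M.det ∧
      ∃ e ≠ 0, linSubst M (quadForm a b c) = quadForm e 0 0 := by
  by_cases ha : a = 0
  · have hb : b = 0 := pow_eq_zero_iff two_ne_zero |>.mp (by simpa [ha] using hd)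
    have hc : c ≠ 0 := fun hc => hq ⟨ha, hb, hc⟩
    refine ⟨!![0, 1; 1, 0], by simp [Matrix.det_fin_two_of], c, hc, ?_⟩
    rw [linSubst_quadForm]
    simp [ha, hb]
  · -- completing the square: `q = a (x + b/(2a) y)²`
    refine ⟨!![1, -b / (2 * a); 0, 1], by simp [Matrix.det_fin_two_of], a, ha, ?_⟩
    rw [linSubst_quadForm]
    congr 1
    · simp
    · field_simp
      ring
    · field_simp
      linear_combination -hd

lemma exists_linSubst_quadForm_eq_mul (h2 : (2 : k) ≠ 0) {a b c s : k}
    (hs : s ^ 2 = b ^ 2 - 4 * a * c) (hd : b ^ 2 - 4 * a * c ≠ 0) :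
    ∃ M : Matrix (Fin 2) (Fin 2) k, IsUnit M.det ∧
      ∃ e ≠ 0, linSubst M (quadForm a b c) = quadForm 0 e 0 := by
  by_cases ha : a = 0
  · subst ha
    have hb : b ≠ 0 := by rintro rfl; simp at hd
    refine ⟨!![1, -c / b; 0, 1], by simp [Matrix.det_fin_two_of], b, hb, ?_⟩
    rw [linSubst_quadForm]
    congr 1
    · simp
    · simp
    · field_simp
      ring
  · have hs0 : s ≠ 0 := by rintro rfl; exact hd (by rw [← hs]; ring)
    have h4 : (4 : k) ≠ 0 := by rw [show (4 : k) = 2 * 2 by norm_num]; exact mul_ne_zero h2 h2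
    -- the columns are the two roots `(s - b : 2a)` and `(-(b + s) : 2a)` of the form
    refine ⟨!![s - b, -(b + s); 2 * a, 2 * a], ?_, -(4 * a * (b ^ 2 - 4 * a * c)), ?_, ?_⟩
    · rw [Matrix.det_fin_two_of, isUnit_iff_ne_zero]
      have hdet : (s - b) * (2 * a) - -(b + s) * (2 * a) = 4 * a * s := by ring
      rw [hdet]
      exact mul_ne_zero (mul_ne_zero h4 ha) hs0
    · exact neg_ne_zero.2 (mul_ne_zero (mul_ne_zero h4 ha) hd)
    · rw [linSubst_quadForm]
      congr 1
      · linear_combination a * hs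
      · linear_combination -2 * a * hs
      · linear_combination a * hs

end Field

end BinaryForm

end

/-- For `I₃ = (c₁x² + c₂xy + c₃y², x³, x²y, xy², y³) ⊂ k[x,y]` with `(c₁,c₂,c₃) ≠ 0` over an
algebraically closed field of characteristic 0: after a linear change of coordinates, `I₃`
equals `(x², xy², y³)` when `c₂² - 4c₁c₃ = 0`, and `(x³, xy, y³)` when `c₂² - 4c₁c₃ ≠ 0`. -/
theorem stmt19 (k : Type*) [Field k] [IsAlgClosed k] [CharZero k]
    (c₁ c₂ c₃ : k) (hc : ¬(c₁ = 0 ∧ c₂ = 0 ∧ c₃ = 0))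
    (I₃ : Ideal (MvPolynomial (Fin 2) k))
    (hI₃ : I₃ = Ideal.span
      {C c₁ * X 0 ^ 2 + C c₂ * X 0 * X 1 + C c₃ * X 1 ^ 2,
       X 0 ^ 3, X 0 ^ 2 * X 1, X 0 * X 1 ^ 2, X 1 ^ 3}) :
    (c₂ ^ 2 - 4 * c₁ * c₃ = 0 →
      ∃ M : Matrix (Fin 2) (Fin 2) k, IsUnit M.det ∧
        Ideal.map (aeval (fun i => C (M i 0) * X 0 + C (M i 1) * X 1) :
            MvPolynomial (Fin 2) k →ₐ[k] MvPolynomial (Fin 2) k).toRingHom I₃ =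
          Ideal.span {(X 0 : MvPolynomial (Fin 2) k) ^ 2, X 0 * X 1 ^ 2, X 1 ^ 3}) ∧
    (c₂ ^ 2 - 4 * c₁ * c₃ ≠ 0 →
      ∃ M : Matrix (Fin 2) (Fin 2) k, IsUnit M.det ∧
        Ideal.map (aeval (fun i => C (M i 0) * X 0 + C (M i 1) * X 1) :
            MvPolynomial (Fin 2) k →ₐ[k] MvPolynomial (Fin 2) k).toRingHom I₃ =
          Ideal.span {(X 0 : MvPolynomial (Fin 2) k) ^ 3, X 0 * X 1, X 1 ^ 3}) := by
  open BinaryForm in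
  have hI : I₃ = Ideal.span (insert (quadForm c₁ c₂ c₃) cubes) := hI₃
  subst hI
  refine ⟨fun hd => ?_, fun hd => ?_⟩
  · obtain ⟨M, hM, e, he, hq⟩ := exists_linSubst_quadForm_eq_sq two_ne_zero hc hd
    refine ⟨M, hM, ?_⟩
    change Ideal.map (linSubst M) _ = _
    rw [map_linSubst_span_insert_cubes hM, hq, span_quadForm_sq_sup_span_cubes he.isUnit]
  · obtain ⟨s, hs⟩ := IsAlgClosed.exists_pow_nat_eq (c₂ ^ 2 - 4 * c₁ * c₃) two_pos
    obtain ⟨M, hM, e, he, hq⟩ := exists_linSubst_quadForm_eq_mul two_ne_zero hs hd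
    refine ⟨M, hM, ?_⟩
    change Ideal.map (linSubst M) _ = _
    rw [map_linSubst_span_insert_cubes hM, hq, span_quadForm_mul_sup_span_cubes he.isUnit]
end
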